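/- Fix p ∈ [1,∞], g ∈ 𝒢 and D ∈ 𝒟̄^p, and let c = sup_{x > 0} g(x)/x (which lies in (0,1]). Then for every X ∈ L^p, sup_{λ > 0} MD^D_g(λX)/λ = c·D(X) + E[X]. Consequently, X ↦ c·D(X) + E[X] is the smallest positively homogeneous functional on L^p dominating MD^D_g, and it is the smallest coherent risk measure dominating MD^D_g. -/

import Mathlib

open MeasureTheory Filter Set
open scoped ENNReal

noncomputable section

variable {Ω : Type*} [MeasurableSpace Ω]

/-- The measure `μ` is nonatomic. -/
def Nonatomic (μ : Measure Ω) : Prop :=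
  ∀ A : Set Ω, MeasurableSet A → 0 < μ A →
    ∃ B, B ⊆ A ∧ MeasurableSet B ∧ 0 < μ B ∧ μ B < μ A

/-- `X` is a.s. equal to a constant. -/
def AEConst (μ : Measure Ω) (X : Ω → ℝ) : Prop :=
  ∃ c : ℝ, X =ᵐ[μ] fun _ => c

/-- `D` is a deviation measure on `L^p`: it is `[0,∞)`-valued and satisfies
(D1) translation invariance, (D2) strict positivity on nonconstant random variables,
(D3) positive homogeneity and (D4) subadditivity. -/
def IsDeviation (μ : Measure Ω) (p : ℝ≥0∞) (D : (Ω → ℝ) → ℝ) : Prop :=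
  (∀ X, MemLp X p μ → 0 ≤ D X) ∧
  (∀ X, MemLp X p μ → ∀ c : ℝ, D (fun ω => X ω + c) = D X) ∧
  (∀ X, MemLp X p μ → ¬ AEConst μ X → 0 < D X) ∧
  (∀ X, MemLp X p μ → ∀ l : ℝ, 0 ≤ l → D (fun ω => l * X ω) = l * D X) ∧
  (∀ X Y, MemLp X p μ → MemLp Y p μ → D (fun ω => X ω + Y ω) ≤ D X + D Y)

/-- (D5) law invariance. -/
def LawInvariant (μ : Measure Ω) (p : ℝ≥0∞) (D : (Ω → ℝ) → ℝ) : Prop :=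
  ∀ X Y, MemLp X p μ → MemLp Y p μ → μ.map X = μ.map Y → D X = D Y

/-- `D` is range normalized: the supremum over nonconstant `X ∈ L^p` of
`D X / (ess-sup X - E[X])` equals `1` (the ratio being interpreted as `0` when
`ess-sup X = ∞`, so that only essentially bounded `X` matter):
`1` is an upper bound of the ratios, and no `k < 1` is an upper bound. -/
def RangeNormalized (μ : Measure Ω) (p : ℝ≥0∞) (D : (Ω → ℝ) → ℝ) : Prop :=
  (∀ X, MemLp X p μ → (∃ c : ℝ, ∀ᵐ ω ∂μ, X ω ≤ c) →
    D X ≤ essSup X μ - ∫ ω, X ω ∂μ) ∧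
  (∀ k : ℝ, k < 1 → ∃ X, MemLp X p μ ∧ (∃ c : ℝ, ∀ᵐ ω ∂μ, X ω ≤ c) ∧ ¬ AEConst μ X ∧
    k * (essSup X μ - ∫ ω, X ω ∂μ) < D X)

/-- Monotonicity [M] for a real-valued functional on `L^p`. -/
def MonotoneRM (μ : Measure Ω) (p : ℝ≥0∞) (ρ : (Ω → ℝ) → ℝ) : Prop :=
  ∀ X Y, MemLp X p μ → MemLp Y p μ → (∀ᵐ ω ∂μ, X ω ≤ Y ω) → ρ X ≤ ρ Y

/-- Cash additivity [CA]. -/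
def CashAdditive (μ : Measure Ω) (p : ℝ≥0∞) (ρ : (Ω → ℝ) → ℝ) : Prop :=
  ∀ X, MemLp X p μ → ∀ c : ℝ, ρ (fun ω => X ω + c) = ρ X + c

/-- Positive homogeneity [PH]. -/
def PosHom (μ : Measure Ω) (p : ℝ≥0∞) (ρ : (Ω → ℝ) → ℝ) : Prop :=
  ∀ X, MemLp X p μ → ∀ l : ℝ, 0 < l → ρ (fun ω => l * X ω) = l * ρ X

/-- Subadditivity [SA]. -/
def SubadditiveRM (μ : Measure Ω) (p : ℝ≥0∞) (ρ : (Ω → ℝ) → ℝ) : Prop :=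
  ∀ X Y, MemLp X p μ → MemLp Y p μ → ρ (fun ω => X ω + Y ω) ≤ ρ X + ρ Y

/-- Convexity [Cx]. -/
def ConvexRMProp (μ : Measure Ω) (p : ℝ≥0∞) (ρ : (Ω → ℝ) → ℝ) : Prop :=
  ∀ X Y, MemLp X p μ → MemLp Y p μ → ∀ l : ℝ, 0 ≤ l → l ≤ 1 →
    ρ (fun ω => l * X ω + (1 - l) * Y ω) ≤ l * ρ X + (1 - l) * ρ Y

/-- SSD-consistency [SC]: `ρ X ≤ ρ Y` whenever `E[u(X)] ≤ E[u(Y)]` for every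
increasing convex `u` (for which both expectations exist). -/
def SSDConsistent (μ : Measure Ω) (p : ℝ≥0∞) (ρ : (Ω → ℝ) → ℝ) : Prop :=
  ∀ X Y, MemLp X p μ → MemLp Y p μ →
    (∀ u : ℝ → ℝ, Monotone u → ConvexOn ℝ univ u →
      Integrable (fun ω => u (X ω)) μ → Integrable (fun ω => u (Y ω)) μ →
      ∫ ω, u (X ω) ∂μ ≤ ∫ ω, u (Y ω) ∂μ) →
    ρ X ≤ ρ Y

/-- Monetary risk measure: [M] and [CA]. -/
def Monetary (μ : Measure Ω) (p : ℝ≥0∞) (ρ : (Ω → ℝ) → ℝ) : Prop :=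
  MonotoneRM μ p ρ ∧ CashAdditive μ p ρ

/-- Coherent risk measure: [M], [CA], [PH], [SA]. -/
def Coherent (μ : Measure Ω) (p : ℝ≥0∞) (ρ : (Ω → ℝ) → ℝ) : Prop :=
  MonotoneRM μ p ρ ∧ CashAdditive μ p ρ ∧ PosHom μ p ρ ∧ SubadditiveRM μ p ρ

/-- Convex risk measure: monetary and [Cx]. -/
def ConvexRiskMeasure (μ : Measure Ω) (p : ℝ≥0∞) (ρ : (Ω → ℝ) → ℝ) : Prop :=
  Monetary μ p ρ ∧ ConvexRMProp μ p ρ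

/-- Consistent risk measure: monetary and [SC]. -/
def ConsistentRiskMeasure (μ : Measure Ω) (p : ℝ≥0∞) (ρ : (Ω → ℝ) → ℝ) : Prop :=
  Monetary μ p ρ ∧ SSDConsistent μ p ρ

/-- Star-shaped risk measure: monetary, normalized at `0` and star-shaped. -/
def StarShapedRM (μ : Measure Ω) (p : ℝ≥0∞) (ρ : (Ω → ℝ) → ℝ) : Prop :=
  Monetary μ p ρ ∧ ρ (fun _ => 0) = 0 ∧
    ∀ X, MemLp X p μ → ∀ l : ℝ, 0 ≤ l → l ≤ 1 → ρ (fun ω => l * X ω) ≤ l * ρ X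

/-- `g ∈ 𝒢`: a risk-weighting function, i.e. a nonconstant, increasing,
1-Lipschitz function on `[0,∞)` with `g 0 = 0`. -/
def IsRiskWeight (g : ℝ → ℝ) : Prop :=
  (∃ x y : ℝ, 0 ≤ x ∧ 0 ≤ y ∧ g x ≠ g y) ∧ MonotoneOn g (Ici 0) ∧
  (∀ x y : ℝ, 0 ≤ x → 0 ≤ y → |g x - g y| ≤ |x - y|) ∧ g 0 = 0

/-- The monotonic mean-deviation measure `MD^D_g = g ∘ D + E`. -/
def MD (μ : Measure Ω) (D : (Ω → ℝ) → ℝ) (g : ℝ → ℝ) (X : Ω → ℝ) : ℝ :=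
  g (D X) + ∫ ω, X ω ∂μ

/-- `V : ℝ × [0,∞) → (−∞,∞]` defining a mean-deviation model:
increasing in each argument, `V m 0 = m`, never `−∞`, and depending
nontrivially on the deviation argument. -/
def IsMDModelV (V : ℝ → ℝ → EReal) : Prop :=
  (∀ d : ℝ, 0 ≤ d → Monotone (fun m => V m d)) ∧
  (∀ m : ℝ, MonotoneOn (fun d => V m d) (Ici 0)) ∧
  (∀ m : ℝ, V m 0 = (m : EReal)) ∧
  (∀ m d : ℝ, 0 ≤ d → V m d ≠ ⊥) ∧
  (∃ m d₁ d₂ : ℝ, 0 ≤ d₁ ∧ 0 ≤ d₂ ∧ V m d₁ ≠ V m d₂)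

/-- Monotonicity [M] for an `(−∞,∞]`-valued functional. -/
def MonotoneE (μ : Measure Ω) (p : ℝ≥0∞) (U : (Ω → ℝ) → EReal) : Prop :=
  ∀ X Y, MemLp X p μ → MemLp Y p μ → (∀ᵐ ω ∂μ, X ω ≤ Y ω) → U X ≤ U Y

/-- Cash additivity [CA] for an `(−∞,∞]`-valued functional. -/
def CashAdditiveE (μ : Measure Ω) (p : ℝ≥0∞) (U : (Ω → ℝ) → EReal) : Prop :=
  ∀ X, MemLp X p μ → ∀ c : ℝ, U (fun ω => X ω + c) = U X + (c : EReal)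

/-- SSD-consistency [SC] for an `(−∞,∞]`-valued functional. -/
def SSDConsistentE (μ : Measure Ω) (p : ℝ≥0∞) (U : (Ω → ℝ) → EReal) : Prop :=
  ∀ X Y, MemLp X p μ → MemLp Y p μ →
    (∀ u : ℝ → ℝ, Monotone u → ConvexOn ℝ univ u →
      Integrable (fun ω => u (X ω)) μ → Integrable (fun ω => u (Y ω)) μ →
      ∫ ω, u (X ω) ∂μ ≤ ∫ ω, u (Y ω) ∂μ) →
    U X ≤ U Y

/-- Left derivative of a real function. -/
def leftDeriv (f : ℝ → ℝ) (x : ℝ) : ℝ := derivWithin f (Iio x) x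

/-- The conjugate function `g*(y) = sup_{x ≥ 0} (x y − g x)`, with values in `(−∞,∞]`. -/
def conjFun (g : ℝ → ℝ) (y : ℝ) : EReal :=
  ⨆ x : Ici (0:ℝ), ((x.1 * y - g x.1 : ℝ) : EReal)

/-- Value-at-Risk: the left `α`-quantile of `X`. -/
def VaR (μ : Measure Ω) (X : Ω → ℝ) (α : ℝ) : ℝ :=
  sInf {x : ℝ | ENNReal.ofReal α ≤ μ {ω | X ω ≤ x}}

/-- The signed Choquet integral `D_h(X) = ∫₀¹ VaR_α(X) h'(1−α) dα`. -/
def Dh (μ : Measure Ω) (h : ℝ → ℝ) (X : Ω → ℝ) : ℝ :=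
  ∫ α in (0:ℝ)..1, VaR μ X α * leftDeriv h (1 - α)

/-- `Φ^p` (described via the conjugate exponent `q`): concave functions `h` on `[0,1]`
with `h 0 = h 1 = 0` and `‖h'‖_q < ∞`. -/
def PhiSet (q : ℝ≥0∞) : Set (ℝ → ℝ) :=
  {h | ConcaveOn ℝ (Icc 0 1) h ∧ h 0 = 0 ∧ h 1 = 0 ∧
    MemLp (leftDeriv h) q ((volume : Measure ℝ).restrict (Ioo 0 1))}

/-- The `L²[0,1]` norm of a function. -/
def Lnorm2 (f : ℝ → ℝ) : ℝ := Real.sqrt (∫ t in (0:ℝ)..1, (f t) ^ 2)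

/-- Left quantile function of a distribution (probability measure) on `ℝ`. -/
def qtl (ν : Measure ℝ) (u : ℝ) : ℝ := sInf {x : ℝ | ENNReal.ofReal u ≤ ν (Iic x)}

/-- Convex order `X ≤_cx Y`: `E[φ(X)] ≤ E[φ(Y)]` for every convex `φ` for which
both expectations exist. -/
def ConvexOrder (μ : Measure Ω) (X Y : Ω → ℝ) : Prop :=
  ∀ φ : ℝ → ℝ, ConvexOn ℝ univ φ → Integrable (fun ω => φ (X ω)) μ →
    Integrable (fun ω => φ (Y ω)) μ → ∫ ω, φ (X ω) ∂μ ≤ ∫ ω, φ (Y ω) ∂μ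

/-- `R` is a total preorder on `L^p`. -/
def TotalPreorderOn (μ : Measure Ω) (p : ℝ≥0∞) (R : (Ω → ℝ) → (Ω → ℝ) → Prop) : Prop :=
  (∀ X, MemLp X p μ → R X X) ∧
  (∀ X Y Z, MemLp X p μ → MemLp Y p μ → MemLp Z p μ → R X Y → R Y Z → R X Z) ∧
  (∀ X Y, MemLp X p μ → MemLp Y p μ → R X Y ∨ R Y X)

/-- Axiom A1 (monotonicity): `X ≤ Y` a.s. implies `X ≽ Y`. -/
def AxiomA1 (μ : Measure Ω) (p : ℝ≥0∞) (R : (Ω → ℝ) → (Ω → ℝ) → Prop) : Prop :=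
  ∀ X Y, MemLp X p μ → MemLp Y p μ → (∀ᵐ ω ∂μ, X ω ≤ Y ω) → R X Y

/-- Axiom B1: for constants `c₁ ≤ c₂` one has `c₁ ≽ c₂`. -/
def AxiomB1 (R : (Ω → ℝ) → (Ω → ℝ) → Prop) : Prop :=
  ∀ c₁ c₂ : ℝ, c₁ ≤ c₂ → R (fun _ => c₁) (fun _ => c₂)

/-- Axiom A2 (translation invariance). -/
def AxiomA2 (μ : Measure Ω) (p : ℝ≥0∞) (R : (Ω → ℝ) → (Ω → ℝ) → Prop) : Prop :=
  ∀ X Y, MemLp X p μ → MemLp Y p μ → ∀ c : ℝ,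
    (R X Y ↔ R (fun ω => X ω + c) (fun ω => Y ω + c))

/-- Axiom A3 (weak positive homogeneity). -/
def AxiomA3 (μ : Measure Ω) (p : ℝ≥0∞) (R : (Ω → ℝ) → (Ω → ℝ) → Prop) : Prop :=
  ∀ X Y, MemLp X p μ → MemLp Y p μ → (∫ ω, X ω ∂μ) = (∫ ω, Y ω ∂μ) → R X Y →
    ∀ l : ℝ, 0 < l → R (fun ω => l * X ω) (fun ω => l * Y ω)

/-- Axiom A4 (risk aversion). -/
def AxiomA4 (μ : Measure Ω) (p : ℝ≥0∞) (R : (Ω → ℝ) → (Ω → ℝ) → Prop) : Prop :=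
  (∀ X Y, MemLp X p μ → MemLp Y p μ → ConvexOrder μ X Y → R X Y) ∧
  (∀ X, MemLp X p μ → ¬ AEConst μ X →
    R (fun _ => ∫ ω, X ω ∂μ) X ∧ ¬ R X (fun _ => ∫ ω, X ω ∂μ))

/-- Axiom A5 (solvability). -/
def AxiomA5 (μ : Measure Ω) (p : ℝ≥0∞) (R : (Ω → ℝ) → (Ω → ℝ) → Prop) : Prop :=
  ∀ X, MemLp X p μ → ∃ c : ℝ, R X (fun _ => c) ∧ R (fun _ => c) X

/-- Axiom A6 (weak convexity). -/
def AxiomA6 (μ : Measure Ω) (p : ℝ≥0∞) (R : (Ω → ℝ) → (Ω → ℝ) → Prop) : Prop :=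
  ∀ X Y, MemLp X p μ → MemLp Y p μ → (∫ ω, X ω ∂μ) = (∫ ω, Y ω ∂μ) →
    R X Y → R Y X →
    ∀ l : ℝ, 0 ≤ l → l ≤ 1 → R (fun ω => l * X ω + (1 - l) * Y ω) X

/-- Axiom A7 (continuity): the upper and lower sets of every `X` are closed in the
`L^p` norm (expressed via sequential closedness, equivalent in the metric space `L^p`). -/
def AxiomA7 (μ : Measure Ω) (p : ℝ≥0∞) (R : (Ω → ℝ) → (Ω → ℝ) → Prop) : Prop :=
  ∀ X, MemLp X p μ →
    (∀ (Y : ℕ → Ω → ℝ) (Z : Ω → ℝ), (∀ n, MemLp (Y n) p μ) → MemLp Z p μ →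
      Tendsto (fun n => eLpNorm (fun ω => Y n ω - Z ω) p μ) atTop (nhds 0) →
      (∀ n, R (Y n) X) → R Z X) ∧
    (∀ (Y : ℕ → Ω → ℝ) (Z : Ω → ℝ), (∀ n, MemLp (Y n) p μ) → MemLp Z p μ →
      Tendsto (fun n => eLpNorm (fun ω => Y n ω - Z ω) p μ) atTop (nhds 0) →
      (∀ n, R X (Y n)) → R X Z)

/-! Since `MD^D_g(λX)/λ = D(X) · g(λD(X))/(λD(X)) + E[X]`, the supremum over `λ > 0` replaces
`g(t)/t` by its supremum `c`, and a positively homogeneous functional dominating `MD^D_g`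
dominates each of these quotients. Coherence of `c D + E` reduces to monotonicity, which holds
because `c ≤ 1` and range normalization gives `D(W) ≤ -E[W]` for `W ≤ 0`. -/

def originSlopes (g : ℝ → ℝ) : Set ℝ := {r : ℝ | ∃ x : ℝ, 0 < x ∧ r = g x / x}

namespace IsRiskWeight

variable {g : ℝ → ℝ} (hg : IsRiskWeight g)
include hg

theorem nonneg {x : ℝ} (hx : 0 ≤ x) : 0 ≤ g x :=
  hg.2.2.2 ▸ hg.2.1 (mem_Ici.mpr le_rfl) hx hx

theorem le_self {x : ℝ} (hx : 0 ≤ x) : g x ≤ x := by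
  have h := hg.2.2.1 x 0 hx le_rfl
  rw [hg.2.2.2, sub_zero, sub_zero, abs_of_nonneg hx] at h
  exact (le_abs_self _).trans h

theorem exists_pos : ∃ z : ℝ, 0 < z ∧ 0 < g z := by
  obtain ⟨x, y, hx, hy, hxy⟩ := hg.1
  -- `g` takes two different values, so one of them is not `g 0 = 0`
  obtain ⟨z, hz, hgz⟩ : ∃ z, 0 ≤ z ∧ g z ≠ 0 := by
    by_cases h : g x = 0
    · exact ⟨y, hy, fun h' => hxy (h.trans h'.symm)⟩
    · exact ⟨x, hx, h⟩
  have hz0 : z ≠ 0 := by rintro rfl; exact hgz hg.2.2.2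
  exact ⟨z, hz.lt_of_ne' hz0, (hg.nonneg hz).lt_of_ne' hgz⟩

theorem originSlopes_nonempty : (originSlopes g).Nonempty :=
  let ⟨z, hz, _⟩ := hg.exists_pos
  ⟨g z / z, z, hz, rfl⟩

theorem originSlopes_le_one : ∀ r ∈ originSlopes g, r ≤ 1 := by
  rintro _ ⟨x, hx, rfl⟩
  exact (div_le_one hx).2 (hg.le_self hx.le)

theorem isLUB_sSup_originSlopes : IsLUB (originSlopes g) (sSup (originSlopes g)) :=
  isLUB_csSup hg.originSlopes_nonempty ⟨1, hg.originSlopes_le_one⟩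

theorem sSup_originSlopes_pos : 0 < sSup (originSlopes g) := by
  obtain ⟨z, hz, hgz⟩ := hg.exists_pos
  exact (div_pos hgz hz).trans_le (hg.isLUB_sSup_originSlopes.1 ⟨z, hz, rfl⟩)

theorem sSup_originSlopes_le_one : sSup (originSlopes g) ≤ 1 :=
  csSup_le hg.originSlopes_nonempty hg.originSlopes_le_one

end IsRiskWeight

theorem isLUB_div_of_isLUB_originSlopes {g : ℝ → ℝ} {c d : ℝ} (hc : IsLUB (originSlopes g) c)
    (hg0 : g 0 = 0) (hd : 0 ≤ d) (e : ℝ) :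
    IsLUB {r : ℝ | ∃ l : ℝ, 0 < l ∧ r = (g (l * d) + l * e) / l} (c * d + e) := by
  rcases hd.eq_or_lt with rfl | hd
  · have hconst : {r : ℝ | ∃ l : ℝ, 0 < l ∧ r = (g (l * 0) + l * e) / l} = {e} := by
      ext r
      simp only [mul_zero, hg0, zero_add, mem_ofPred_eq, mem_singleton_iff]
      exact ⟨fun ⟨l, hl, hr⟩ => hr.trans (by field_simp), fun hr => ⟨1, one_pos, by simp [hr]⟩⟩
    rw [hconst, mul_zero, zero_add]
    exact isLUB_singleton
  -- substituting `x = l d`, the quotients are the affine image `s d + e` of the slopes `s`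
  have himage : {r : ℝ | ∃ l : ℝ, 0 < l ∧ r = (g (l * d) + l * e) / l} =
      (· + e) '' ((· * d) '' originSlopes g) := by
    ext r
    simp only [originSlopes, mem_ofPred_eq, mem_image]
    constructor
    · rintro ⟨l, hl, rfl⟩
      exact ⟨g (l * d) / (l * d) * d, ⟨_, ⟨l * d, by positivity, rfl⟩, rfl⟩, by field_simp⟩
    · rintro ⟨_, ⟨_, ⟨x, hx, rfl⟩, rfl⟩, rfl⟩
      exact ⟨x / d, by positivity, by field_simp⟩
  rw [himage]
  exact (OrderIso.addRight e).isLUB_image'.2 (hc.mul_right hd.le)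

theorem essSup_nonpos_of_ae_nonpos {μ : Measure Ω} {W : Ω → ℝ} (h : ∀ᵐ ω ∂μ, W ω ≤ 0) :
    essSup W μ ≤ 0 := by
  -- without a lower bound on `W`, `essSup W μ` is the junk value `sInf ∅ = 0`
  rw [essSup, limsup_eq]
  by_cases hb : BddBelow {a : ℝ | ∀ᶠ ω in ae μ, W ω ≤ a}
  · exact csInf_le hb h
  · rw [csInf_of_not_bddBelow hb, Real.sInf_empty]

section MeanDeviation

variable {μ : Measure Ω} {p : ℝ≥0∞} {D : (Ω → ℝ) → ℝ}

theorem MD_const_mul (hD : IsDeviation μ p D) (g : ℝ → ℝ) {X : Ω → ℝ} (hX : MemLp X p μ)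
    {l : ℝ} (hl : 0 ≤ l) :
    MD μ D g (fun ω => l * X ω) = g (l * D X) + l * ∫ ω, X ω ∂μ := by
  rw [MD, hD.2.2.2.1 X hX l hl, integral_const_mul]

theorem isLUB_MD_const_mul_div (hD : IsDeviation μ p D) {g : ℝ → ℝ} (hg : IsRiskWeight g)
    {X : Ω → ℝ} (hX : MemLp X p μ) :
    IsLUB {r : ℝ | ∃ l : ℝ, 0 < l ∧ r = MD μ D g (fun ω => l * X ω) / l}
      (sSup (originSlopes g) * D X + ∫ ω, X ω ∂μ) := by
  have hquot : {r : ℝ | ∃ l : ℝ, 0 < l ∧ r = MD μ D g (fun ω => l * X ω) / l} =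
      {r : ℝ | ∃ l : ℝ, 0 < l ∧ r = (g (l * D X) + l * ∫ ω, X ω ∂μ) / l} := by
    ext r
    exact exists_congr fun l => and_congr_right fun hl => by rw [MD_const_mul hD g hX hl.le]
  rw [hquot]
  exact isLUB_div_of_isLUB_originSlopes hg.isLUB_sSup_originSlopes hg.2.2.2 (hD.1 X hX) _

theorem PosHom.mem_upperBounds_div_of_le {F ρ : (Ω → ℝ) → ℝ} (hρ : PosHom μ p ρ)
    (hFρ : ∀ X, MemLp X p μ → F X ≤ ρ X) {X : Ω → ℝ} (hX : MemLp X p μ) :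
    ρ X ∈ upperBounds {r : ℝ | ∃ l : ℝ, 0 < l ∧ r = F (fun ω => l * X ω) / l} := by
  rintro _ ⟨l, hl, rfl⟩
  rw [div_le_iff₀ hl, mul_comm, ← hρ X hX l hl]
  exact hFρ _ (hX.const_mul l)

variable (c : ℝ)

theorem posHom_mul_add_integral (hD : IsDeviation μ p D) :
    PosHom μ p (fun X => c * D X + ∫ ω, X ω ∂μ) := by
  intro X hX l hl
  dsimp only
  rw [hD.2.2.2.1 X hX l hl.le, integral_const_mul]
  ring

theorem cashAdditive_mul_add_integral [IsProbabilityMeasure μ] (hp : 1 ≤ p)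
    (hD : IsDeviation μ p D) : CashAdditive μ p (fun X => c * D X + ∫ ω, X ω ∂μ) := by
  intro X hX a
  dsimp only
  rw [hD.2.1 X hX a, integral_add (hX.integrable hp) (integrable_const a), integral_const,
    probReal_univ, one_smul]
  ring

theorem subadditiveRM_mul_add_integral [IsFiniteMeasure μ] (hp : 1 ≤ p) (hD : IsDeviation μ p D)
    (hc : 0 ≤ c) :
    SubadditiveRM μ p (fun X => c * D X + ∫ ω, X ω ∂μ) := by
  intro X Y hX hY
  dsimp only
  rw [integral_add (hX.integrable hp) (hY.integrable hp)]
  nlinarith [hD.2.2.2.2 X Y hX hY]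

theorem monotoneRM_mul_add_integral [IsFiniteMeasure μ] (hp : 1 ≤ p) (hD : IsDeviation μ p D)
    (hDr : RangeNormalized μ p D) (hc₀ : 0 ≤ c) (hc₁ : c ≤ 1) :
    MonotoneRM μ p (fun X => c * D X + ∫ ω, X ω ∂μ) := by
  intro X Y hX hY hXY
  set W : Ω → ℝ := fun ω => X ω - Y ω
  have hW : MemLp W p μ := hX.sub hY
  have hW_nonpos : ∀ᵐ ω ∂μ, W ω ≤ 0 := hXY.mono fun ω h => sub_nonpos.2 h
  have hDX : D X ≤ D Y + D W := by
    simpa only [W, add_sub_cancel] using hD.2.2.2.2 Y W hY hW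
  have hDW : D W ≤ (∫ ω, Y ω ∂μ) - ∫ ω, X ω ∂μ := by
    have h := hDr.1 W hW ⟨0, hW_nonpos⟩
    rw [integral_sub (hX.integrable hp) (hY.integrable hp)] at h
    linarith [essSup_nonpos_of_ae_nonpos hW_nonpos]
  have hcDW : c * D W ≤ D W := mul_le_of_le_one_left (hD.1 W hW) hc₁
  nlinarith

theorem coherent_mul_add_integral [IsProbabilityMeasure μ] (hp : 1 ≤ p)
    (hD : IsDeviation μ p D) (hDr : RangeNormalized μ p D) (hc₀ : 0 ≤ c) (hc₁ : c ≤ 1) :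
    Coherent μ p (fun X => c * D X + ∫ ω, X ω ∂μ) :=
  ⟨monotoneRM_mul_add_integral c hp hD hDr hc₀ hc₁, cashAdditive_mul_add_integral c hp hD,
    posHom_mul_add_integral c hD, subadditiveRM_mul_add_integral c hp hD hc₀⟩

end MeanDeviation

theorem MD_smallest_dominating_coherent_general
    (μ : Measure Ω) [IsProbabilityMeasure μ]
    (p : ℝ≥0∞) (hp : 1 ≤ p)
    (D : (Ω → ℝ) → ℝ) (hD : IsDeviation μ p D)
    (hDr : RangeNormalized μ p D)
    (g : ℝ → ℝ) (hg : IsRiskWeight g)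
    (c : ℝ) (hc : c = sSup {r : ℝ | ∃ x : ℝ, 0 < x ∧ r = g x / x}) :
    (0 < c ∧ c ≤ 1) ∧
    (∀ X, MemLp X p μ →
      sSup {r : ℝ | ∃ l : ℝ, 0 < l ∧ r = MD μ D g (fun ω => l * X ω) / l}
        = c * D X + ∫ ω, X ω ∂μ) ∧
    (PosHom μ p (fun X => c * D X + ∫ ω, X ω ∂μ) ∧
      (∀ X, MemLp X p μ → MD μ D g X ≤ c * D X + ∫ ω, X ω ∂μ) ∧
      (∀ ρ : (Ω → ℝ) → ℝ, PosHom μ p ρ →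
        (∀ X, MemLp X p μ → MD μ D g X ≤ ρ X) →
        ∀ X, MemLp X p μ → c * D X + ∫ ω, X ω ∂μ ≤ ρ X)) ∧
    (Coherent μ p (fun X => c * D X + ∫ ω, X ω ∂μ) ∧
      (∀ ρ : (Ω → ℝ) → ℝ, Coherent μ p ρ →
        (∀ X, MemLp X p μ → MD μ D g X ≤ ρ X) →
        ∀ X, MemLp X p μ → c * D X + ∫ ω, X ω ∂μ ≤ ρ X)) := by
  change c = sSup (originSlopes g) at hc
  subst hc
  have hc₀ := hg.sSup_originSlopes_pos
  have hc₁ := hg.sSup_originSlopes_le_one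
  have hLUB := fun X (hX : MemLp X p μ) => isLUB_MD_const_mul_div hD hg hX
  have hmin : ∀ ρ : (Ω → ℝ) → ℝ, PosHom μ p ρ → (∀ X, MemLp X p μ → MD μ D g X ≤ ρ X) →
      ∀ X, MemLp X p μ → sSup (originSlopes g) * D X + ∫ ω, X ω ∂μ ≤ ρ X :=
    fun ρ hρ hρMD X hX => (hLUB X hX).2 (hρ.mem_upperBounds_div_of_le hρMD hX)
  refine ⟨⟨hc₀, hc₁⟩, fun X hX => (hLUB X hX).csSup_eq ⟨_, 1, one_pos, rfl⟩,
    ⟨posHom_mul_add_integral _ hD, fun X hX => ?_, hmin⟩,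
    coherent_mul_add_integral _ hp hD hDr hc₀.le hc₁, fun ρ hρ => hmin ρ hρ.2.2.1⟩
  simpa only [one_mul, div_one] using (hLUB X hX).1 ⟨1, one_pos, rfl⟩

/-- Proposition (prop:smCoherant): with `c = sup_{x>0} g(x)/x ∈ (0,1]`,
`sup_{λ>0} MD^D_g(λX)/λ = c D(X) + E[X]`; this functional is the smallest positively
homogeneous functional dominating `MD^D_g` and the smallest coherent risk measure
dominating `MD^D_g`. -/
theorem MD_smallest_dominating_coherent
    (μ : Measure Ω) [IsProbabilityMeasure μ] (hna : Nonatomic μ)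
    (p : ℝ≥0∞) (hp : 1 ≤ p)
    (D : (Ω → ℝ) → ℝ) (hD : IsDeviation μ p D) (hDl : LawInvariant μ p D)
    (hDr : RangeNormalized μ p D)
    (g : ℝ → ℝ) (hg : IsRiskWeight g)
    (c : ℝ) (hc : c = sSup {r : ℝ | ∃ x : ℝ, 0 < x ∧ r = g x / x}) :
    (0 < c ∧ c ≤ 1) ∧
    (∀ X, MemLp X p μ →
      sSup {r : ℝ | ∃ l : ℝ, 0 < l ∧ r = MD μ D g (fun ω => l * X ω) / l}
        = c * D X + ∫ ω, X ω ∂μ) ∧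
    (PosHom μ p (fun X => c * D X + ∫ ω, X ω ∂μ) ∧
      (∀ X, MemLp X p μ → MD μ D g X ≤ c * D X + ∫ ω, X ω ∂μ) ∧
      (∀ ρ : (Ω → ℝ) → ℝ, PosHom μ p ρ →
        (∀ X, MemLp X p μ → MD μ D g X ≤ ρ X) →
        ∀ X, MemLp X p μ → c * D X + ∫ ω, X ω ∂μ ≤ ρ X)) ∧
    (Coherent μ p (fun X => c * D X + ∫ ω, X ω ∂μ) ∧
      (∀ ρ : (Ω → ℝ) → ℝ, Coherent μ p ρ →
        (∀ X, MemLp X p μ → MD μ D g X ≤ ρ X) →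
        ∀ X, MemLp X p μ → c * D X + ∫ ω, X ω ∂μ ≤ ρ X)) :=
  MD_smallest_dominating_coherent_general μ p hp D hD hDr g hg c hc
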